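/- The density π(Γ) ∝ exp(-(U(θ) + pᵀp/2)/T - (ξ - B/T)²/(2T)) is a stationary solution of the Fokker–Planck equation associated with the SDE dθ = p dt, dp = [f(θ) - (ξ+χ)p] dt + √(2(B+χT)) dW, dξ = (pᵀp - Td) dt, where f = -∇U; i.e., the stationary Fokker–Planck operator applied to π vanishes. -/

import Mathlib

open Real

/-- The extended Gibbs density
`π(θ,p,ξ) = exp(-(U(θ)+pᵀp/2)/T - (ξ-B/T)²/(2T))` is a stationary solution of
the Fokker–Planck equation of the adaptive-Langevin / Nosé–Hoover SDE:
`L*π = -∇_θ·(pπ) - ∇_p·([f-(ξ+χ)p]π) - ∂_ξ((pᵀp - Td)π) + (B+χT)Δ_p π = 0`,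
where `f = -∇U`. -/
theorem nose_hoover_fokker_planck_stationary
    {d : ℕ} (U : (Fin d → ℝ) → ℝ) (hU : ContDiff ℝ (⊤ : ℕ∞) U)
    (T χ B : ℝ) (hT : 0 < T) (hχ : 0 < χ) (hB : 0 ≤ B)
    (pi' : (Fin d → ℝ) → (Fin d → ℝ) → ℝ → ℝ)
    (hpi : ∀ θ p ξ, pi' θ p ξ =
      Real.exp (-(U θ + (∑ i, p i ^ 2) / 2) / T - (ξ - B / T) ^ 2 / (2 * T)))
    (f : (Fin d → ℝ) → (Fin d → ℝ))
    (hf : ∀ θ i, f θ i = -(fderiv ℝ U θ (Pi.single i 1)))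
    (θ p : Fin d → ℝ) (ξ : ℝ) :
    -(∑ i, deriv (fun s => p i * pi' (Function.update θ i s) p ξ) (θ i))
    - (∑ i, deriv
        (fun s => (f θ i - (ξ + χ) * s) * pi' θ (Function.update p i s) ξ) (p i))
    - deriv (fun s => ((∑ i, p i ^ 2) - T * d) * pi' θ p s) ξ
    + (B + χ * T) *
        (∑ i, deriv (fun s =>
          deriv (fun t => pi' θ (Function.update p i t) ξ) s) (p i))
    = 0 := by
  have hT' : T ≠ 0 := ne_of_gt hT
  set R : Fin d → ℝ := fun i => ∑ j ∈ Finset.univ.erase i, p j ^ 2 with hR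
  -- the sum of squares after a coordinate update
  have hsum : ∀ (i : Fin d) (s : ℝ),
      (∑ j, Function.update p i s j ^ 2) = s ^ 2 + R i := by
    intro i s
    rw [hR]
    rw [← Finset.add_sum_erase Finset.univ _ (Finset.mem_univ i)]
    congr 1
    · simp
    · exact Finset.sum_congr rfl fun j hj => by
        rw [Function.update_of_ne (Finset.ne_of_mem_erase hj)]
  have hRS : ∀ i, p i ^ 2 + R i = ∑ j, p j ^ 2 := by
    intro i
    have := hsum i (p i)
    rw [Function.update_eq_self] at this
    exact this.symm
  have hpiE : ∀ i, Real.exp (-(U θ + (p i ^ 2 + R i) / 2) / T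
      - (ξ - B / T) ^ 2 / (2 * T)) = pi' θ p ξ := by
    intro i
    rw [hpi, ← hRS i]
  -- derivative of the Gaussian in the p-direction
  have hG : ∀ (i : Fin d) (s : ℝ), HasDerivAt
      (fun t => Real.exp (-(U θ + (t ^ 2 + R i) / 2) / T - (ξ - B / T) ^ 2 / (2 * T)))
      (Real.exp (-(U θ + (s ^ 2 + R i) / 2) / T - (ξ - B / T) ^ 2 / (2 * T))
        * (-(s / T))) s := by
    intro i s
    have h := ((((((hasDerivAt_pow 2 s).add_const (R i)).div_const 2).const_add
      (U θ)).neg.div_const T).sub_const ((ξ - B / T) ^ 2 / (2 * T))).exp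
    simp only [Pi.neg_apply] at h
    convert h using 1
    push_cast
    field_simp
  -- θ-direction derivatives
  have hθterm : ∀ i : Fin d,
      deriv (fun s => p i * pi' (Function.update θ i s) p ξ) (θ i)
      = -(pi' θ p ξ / T) * (p i * fderiv ℝ U θ (Pi.single i 1)) := by
    intro i
    have hg : HasFDerivAt U (fderiv ℝ U θ) (Function.update θ i (θ i)) := by
      rw [Function.update_eq_self]
      exact ((hU.differentiable (by simp)) θ).hasFDerivAt
    have h0 : HasDerivAt (fun s => U (Function.update θ i s))
        (fderiv ℝ U θ (Pi.single i 1)) (θ i) :=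
      hg.comp_hasDerivAt (θ i) (hasDerivAt_update θ i (θ i))
    have h := ((((h0.add_const ((∑ j, p j ^ 2) / 2)).neg.div_const T).sub_const
      ((ξ - B / T) ^ 2 / (2 * T))).exp).const_mul (p i)
    simp only [Pi.neg_apply] at h
    have hfun : (fun s => p i * pi' (Function.update θ i s) p ξ)
        = fun s => p i * Real.exp (-(U (Function.update θ i s) + (∑ j, p j ^ 2) / 2) / T
            - (ξ - B / T) ^ 2 / (2 * T)) := by
      funext s; rw [hpi]
    rw [hfun, h.deriv]
    simp only [Function.update_eq_self]
    rw [hpi]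
    ring
  -- p-direction first derivatives
  have hpterm : ∀ i : Fin d,
      deriv (fun s => (f θ i - (ξ + χ) * s) * pi' θ (Function.update p i s) ξ) (p i)
      = (pi' θ p ξ / T) * (p i * fderiv ℝ U θ (Pi.single i 1))
        + ((ξ + χ) * pi' θ p ξ / T) * p i ^ 2 - (ξ + χ) * pi' θ p ξ := by
    intro i
    have hlin : HasDerivAt (fun s : ℝ => f θ i - (ξ + χ) * s) (-((ξ + χ) * 1)) (p i) :=
      ((hasDerivAt_id (p i)).const_mul (ξ + χ)).const_sub (f θ i)
    have h := hlin.mul (hG i (p i))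
    simp only [Pi.mul_def] at h
    have hfun : (fun s => (f θ i - (ξ + χ) * s) * pi' θ (Function.update p i s) ξ)
        = fun s => (f θ i - (ξ + χ) * s) *
            Real.exp (-(U θ + (s ^ 2 + R i) / 2) / T - (ξ - B / T) ^ 2 / (2 * T)) := by
      funext s; rw [hpi, hsum i s]
    rw [hfun, h.deriv]
    simp only [hpiE i]
    rw [hf]
    ring
  -- p-direction second derivatives
  have hinner : ∀ (i : Fin d) (s : ℝ),
      deriv (fun t => pi' θ (Function.update p i t) ξ) s
      = Real.exp (-(U θ + (s ^ 2 + R i) / 2) / T - (ξ - B / T) ^ 2 / (2 * T))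
          * (-(s / T)) := by
    intro i s
    have hfun : (fun t => pi' θ (Function.update p i t) ξ)
        = fun t => Real.exp (-(U θ + (t ^ 2 + R i) / 2) / T
            - (ξ - B / T) ^ 2 / (2 * T)) := by
      funext t; rw [hpi, hsum i t]
    rw [hfun, (hG i s).deriv]
  have hsecond : ∀ i : Fin d,
      deriv (fun s => deriv (fun t => pi' θ (Function.update p i t) ξ) s) (p i)
      = (pi' θ p ξ / T ^ 2) * p i ^ 2 - pi' θ p ξ / T := by
    intro i
    have hfun : (fun s => deriv (fun t => pi' θ (Function.update p i t) ξ) s)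
        = fun s => Real.exp (-(U θ + (s ^ 2 + R i) / 2) / T
            - (ξ - B / T) ^ 2 / (2 * T)) * (-(s / T)) := funext (hinner i)
    have hlin : HasDerivAt (fun s : ℝ => -(s / T)) (-(1 / T)) (p i) :=
      ((hasDerivAt_id (p i)).div_const T).neg
    have h := (hG i (p i)).mul hlin
    simp only [Pi.mul_def] at h
    rw [hfun, h.deriv]
    simp only [hpiE i]
    field_simp
    ring
  -- ξ-direction derivative
  have hξterm : deriv (fun s => ((∑ i, p i ^ 2) - T * d) * pi' θ p s) ξ
      = ((∑ i, p i ^ 2) - T * d) * (pi' θ p ξ * (-((ξ - B / T) / T))) := by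
    have hfun : (fun s => ((∑ i, p i ^ 2) - T * d) * pi' θ p s)
        = fun s => ((∑ i, p i ^ 2) - T * d) *
            Real.exp (-(U θ + (∑ i, p i ^ 2) / 2) / T - (s - B / T) ^ 2 / (2 * T)) := by
      funext s; rw [hpi]
    have h0 : HasDerivAt (fun s : ℝ => -(U θ + (∑ i, p i ^ 2) / 2) / T
        - (s - B / T) ^ 2 / (2 * T)) (-((ξ - B / T) / T)) ξ := by
      have h := ((((hasDerivAt_id ξ).sub_const (B / T)).pow 2).div_const
        (2 * T)).const_sub (-(U θ + (∑ i, p i ^ 2) / 2) / T)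
      simp only [id_eq, Pi.pow_apply] at h
      refine h.congr_deriv ?_
      push_cast
      ring
    have h := (h0.exp).const_mul ((∑ i, p i ^ 2) - T * (d : ℝ))
    rw [hfun, h.deriv]
    simp only [hpi, id_eq]
    try ring
  -- assemble
  simp only [hθterm, hpterm, hsecond, hξterm, Finset.sum_add_distrib,
    Finset.sum_sub_distrib, ← Finset.mul_sum, Finset.sum_const, Finset.card_univ,
    Fintype.card_fin, nsmul_eq_mul]
  field_simp
  ring
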